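/- Let L ⊆ L' be even non-degenerate integral lattices with L of finite index in L'. Then the stabilizer in O(L') of the subgroup I = L/L'(M) of Q = L'/L'(M) is contained in O(L), where M is the exponent of L'/L. Consequently O(L) ∩ O(L') has finite index in O(L'), and in particular the stable orthogonal group Õ⁺(L) has finite index in O⁺(L'). -/

import Mathlib

/-- A rational number is an integer. -/
def IsIntQ (q : ℚ) : Prop := ∃ n : ℤ, q = (n : ℚ)

/-!
Since `M·L' ⊆ L`, membership in `L` can be read off modulo `M·L'`, which gives (1).
For (2), pick `D > 0` with `D·L^∨ ⊆ L` (the dual lattice is spanned by a dual basis) and put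
`N = M·D`. As `L'` is finitely generated, `L'/N·L'` is finite, so isometries of `L'` fall into
finitely many classes according to their values modulo `N·L'` on generators of `L'`. If `g` and `t`
are in the same class, `h = t⁻¹g` is the identity modulo `N·L' ⊆ L`, so it preserves `L`; and for
`x ∈ L^∨`, `D·(h x - x) = h (D x) - D x ∈ MD·L'` forces `h x - x ∈ M·L' ⊆ L`.
-/

open Submodule Pointwise

theorem isIntQ_iff_mem_one {q : ℚ} : IsIntQ q ↔ q ∈ (1 : Submodule ℤ ℚ) := by
  simp [IsIntQ, mem_one, eq_comm]

theorem exists_finset_forall_exists_eq_of_finite_image {α β : Type*} [Nonempty α] (f : α → β)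
    {S : Set α} (hS : (f '' S).Finite) : ∃ T : Finset α, ∀ a ∈ S, ∃ t ∈ T, t ∈ S ∧ f t = f a := by
  classical
  refine ⟨hS.toFinset.image (Function.invFunOn f S),
    fun a ha => ⟨Function.invFunOn f S (f a), ?_, ?_, ?_⟩⟩
  · exact Finset.mem_image_of_mem _ (hS.mem_toFinset.2 ⟨a, ha, rfl⟩)
  · exact Function.invFunOn_mem ⟨a, ha, rfl⟩
  · exact Function.invFunOn_eq ⟨a, ha, rfl⟩

namespace LinearEquiv

variable {R M : Type*} [Semiring R] [AddCommMonoid M] [Module R M]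

theorem image_eq_self_of_mapsTo (e : M ≃ₗ[R] M) {S : Set M} (h : Set.MapsTo e S S)
    (h' : Set.MapsTo e.symm S S) : e '' S = S :=
  h.image_subset.antisymm fun x hx => ⟨e.symm x, h' hx, e.apply_symm_apply x⟩

theorem mapsTo_of_image_eq_self (e : M ≃ₗ[R] M) {S : Set M} (h : e '' S = S) :
    Set.MapsTo e S S :=
  Set.mapsTo_iff_image_subset.2 h.subset

theorem mapsTo_symm_of_image_eq_self (e : M ≃ₗ[R] M) {S : Set M} (h : e '' S = S) :
    Set.MapsTo e.symm S S := by
  intro x hx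
  rw [← h] at hx
  obtain ⟨y, hy, rfl⟩ := hx
  simpa using hy

theorem image_trans_symm_eq_self {g t : M ≃ₗ[R] M} {S : Set M} (hg : g '' S = S)
    (ht : t '' S = S) : g.trans t.symm '' S = S :=
  image_eq_self_of_mapsTo _
    ((t.mapsTo_symm_of_image_eq_self ht).comp (g.mapsTo_of_image_eq_self hg))
    ((g.mapsTo_symm_of_image_eq_self hg).comp (t.mapsTo_of_image_eq_self ht))

end LinearEquiv

theorem LinearEquiv.isometry_trans_symm {R M : Type*} [CommSemiring R] [AddCommMonoid M]
    [Module R M] (B : M →ₗ[R] M →ₗ[R] R) {g t : M ≃ₗ[R] M}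
    (hg : ∀ x y, B (g x) (g y) = B x y) (ht : ∀ x y, B (t x) (t y) = B x y) (x y : M) :
    B (g.trans t.symm x) (g.trans t.symm y) = B x y := by
  rw [LinearEquiv.trans_apply, LinearEquiv.trans_apply, ← ht, t.apply_symm_apply,
    t.apply_symm_apply, hg]

section Lattice

variable {V : Type*} [AddCommGroup V] [Module ℚ V]

theorem intCast_smul_mem (L : Submodule ℤ V) (k : ℤ) {v : V} (hv : v ∈ L) : (k : ℚ) • v ∈ L := by
  rw [Int.cast_smul_eq_zsmul]
  exact L.smul_mem k hv

theorem natCast_smul_mem (L : Submodule ℤ V) (k : ℕ) {v : V} (hv : v ∈ L) : (k : ℚ) • v ∈ L := by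
  exact_mod_cast intCast_smul_mem L k hv

theorem exists_natCast_smul_mem_of_mem_span {L : Submodule ℤ V} {v : V}
    (hv : v ∈ span ℚ (L : Set V)) : ∃ n : ℕ, 0 < n ∧ (n : ℚ) • v ∈ L := by
  induction hv using Submodule.span_induction with
  | mem x hx => exact ⟨1, one_pos, by simpa using hx⟩
  | zero => exact ⟨1, one_pos, by simp⟩
  | add x y _ _ hx hy =>
    obtain ⟨m, hm, hmx⟩ := hx
    obtain ⟨n, hn, hny⟩ := hy
    refine ⟨n * m, Nat.mul_pos hn hm, ?_⟩
    rw [smul_add, Nat.cast_mul, mul_smul, mul_comm, mul_smul]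
    exact L.add_mem (natCast_smul_mem L n hmx) (natCast_smul_mem L m hny)
  | smul q x _ hx =>
    obtain ⟨n, hn, hnx⟩ := hx
    refine ⟨q.den * n, Nat.mul_pos q.den_pos hn, ?_⟩
    have : ((q.den * n : ℕ) : ℚ) • q • x = (q.num : ℚ) • (n : ℚ) • x := by
      rw [smul_smul, smul_smul, Nat.cast_mul, mul_right_comm, Rat.den_mul_eq_num]
    rw [this]
    exact intCast_smul_mem L q.num hnx

theorem exists_natCast_smul_mem_of_fg {L N : Submodule ℤ V} (hN : N.FG)
    (hNL : ∀ x ∈ N, x ∈ span ℚ (L : Set V)) :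
    ∃ n : ℕ, 0 < n ∧ ∀ x ∈ N, (n : ℚ) • x ∈ L := by
  obtain ⟨s, rfl⟩ := hN
  choose! n hn hnL using fun x (hx : x ∈ s) =>
    exists_natCast_smul_mem_of_mem_span (hNL x (subset_span hx))
  refine ⟨∏ x ∈ s, n x, Finset.prod_pos hn, fun x hx => ?_⟩
  induction hx using Submodule.span_induction with
  | mem x hx =>
    obtain ⟨k, hk⟩ := Finset.dvd_prod_of_mem n hx
    rw [hk, Nat.cast_mul, mul_comm, mul_smul]
    exact natCast_smul_mem L k (hnL x hx)
  | zero => simp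
  | add x y _ _ hx hy => rw [smul_add]; exact L.add_mem hx hy
  | smul a x _ hx => rw [smul_comm]; exact L.smul_mem a hx

theorem exists_natCast_smul_mem_of_mem_dualSubmodule [FiniteDimensional ℚ V]
    {B : LinearMap.BilinForm ℚ V} (hB : B.SeparatingLeft) {L : Submodule ℤ V}
    (hL : span ℚ (L : Set V) = ⊤) :
    ∃ D : ℕ, 0 < D ∧ ∀ x ∈ B.dualSubmodule L, (D : ℚ) • x ∈ L := by
  classical
  let b := Module.Basis.ofSpan hL.ge
  have := Module.Finite.finite_basis b
  have hbL : span ℤ (Set.range b) ≤ L := span_le.2 (Module.Basis.ofSpan_subset hL.ge)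
  let d := B.dualBasis (.ofSeparatingLeft hB) b
  have hdual : B.dualSubmodule L ≤ span ℤ (Set.range d) := by
    rw [← LinearMap.BilinForm.dualSubmodule_span_of_basis]
    exact fun x hx y hy => hx y (hbL hy)
  obtain ⟨D, hD, hDL⟩ := exists_natCast_smul_mem_of_fg (fg_span (Set.finite_range d))
    (fun x _ => hL ▸ mem_top)
  exact ⟨D, hD, fun x hx => hDL x (hdual hx)⟩

theorem finite_map_mkQ_natCast_smul {L : Submodule ℤ V} (hL : L.FG) {N : ℕ} (hN : N ≠ 0) :
    Finite (L.map ((N : ℚ) • L).mkQ) := by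
  have : Module.Finite ℤ (L.map ((N : ℚ) • L).mkQ) := Module.Finite.iff_fg.2 (hL.map _)
  refine Module.finite_of_fg_torsion _ fun ⟨_, u, hu, rfl⟩ =>
    ⟨⟨N, mem_nonZeroDivisors_of_ne_zero (by exact_mod_cast hN)⟩, Subtype.ext ?_⟩
  show (N : ℤ) • mkQ _ u = 0
  rw [← map_zsmul, mkQ_apply, Quotient.mk_eq_zero, mem_smul_pointwise_iff_exists]
  exact ⟨u, hu, Int.cast_smul_eq_zsmul ℚ _ _ |>.trans (by simp)⟩

theorem exists_finset_forall_sub_mem {L K : Submodule ℤ V} (hL : L.FG) [Finite (L.map K.mkQ)]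
    (S : Set (V ≃ₗ[ℚ] V)) (hS : ∀ g ∈ S, Set.MapsTo g L L) :
    ∃ T : Finset (V ≃ₗ[ℚ] V), ∀ g ∈ S, ∃ t ∈ T, t ∈ S ∧ ∀ u ∈ L, g u - t u ∈ K := by
  obtain ⟨s, hs⟩ := hL
  let residues : (V ≃ₗ[ℚ] V) → (s → V ⧸ K) := fun g x => K.mkQ (g x)
  have hfin : (residues '' S).Finite := by
    refine (Set.Finite.pi fun _ => (L.map K.mkQ : Set (V ⧸ K)).toFinite).subset ?_
    rintro _ ⟨g, hg, rfl⟩ x -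
    exact ⟨g x, hS g hg (hs ▸ subset_span x.2), rfl⟩
  obtain ⟨T, hT⟩ := exists_finset_forall_exists_eq_of_finite_image residues hfin
  refine ⟨T, fun g hg => ?_⟩
  obtain ⟨t, htT, htS, hres⟩ := hT g hg
  refine ⟨t, htT, htS, fun u hu => ?_⟩
  suffices span ℤ s ≤ K.comap (((g : V →ₗ[ℚ] V) - t).restrictScalars ℤ) from this (hs ▸ hu)
  refine span_le.2 fun x hx => ?_
  have := congrFun hres ⟨x, hx⟩
  simp only [residues, mkQ_apply, Submodule.Quotient.eq] at this
  simpa using neg_mem this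

theorem mapsTo_smul_of_mapsTo {F : Type*} [FunLike F V V] [LinearMapClass F ℚ V V]
    (f : F) {L : Submodule ℤ V} (hf : Set.MapsTo f L L) (c : ℚ) :
    Set.MapsTo f (c • L : Submodule ℤ V) (c • L : Submodule ℤ V) := by
  intro x hx
  obtain ⟨y, hy, rfl⟩ := (mem_smul_pointwise_iff_exists _ _ _).1 hx
  exact (mem_smul_pointwise_iff_exists _ _ _).2 ⟨f y, hf hy, (map_smul f c y).symm⟩

theorem mapsTo_of_forall_exists_sub_eq_smul {f : V → V} {L L' : Submodule ℤ V} {c : ℚ}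
    (hc : ∀ z ∈ L', c • z ∈ L) (hf : ∀ x ∈ L, ∃ y ∈ L, ∃ z ∈ L', f x - y = c • z) :
    Set.MapsTo f L L := by
  intro x hx
  obtain ⟨y, hy, z, hz, hfx⟩ := hf x hx
  rw [← sub_add_cancel (f x) y, hfx]
  exact L.add_mem (hc z hz) hy

theorem trans_symm_sub_mem {L K : Submodule ℤ V} {g t : V ≃ₗ[ℚ] V}
    (ht : Set.MapsTo t.symm K K) (h : ∀ u ∈ L, g u - t u ∈ K) (u : V) (hu : u ∈ L) :
    g.trans t.symm u - u ∈ K := by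
  simpa using ht (h u hu)

theorem image_eq_self_of_forall_sub_mem {L L' K : Submodule ℤ V} (hKL : K ≤ L) (hLL' : L ≤ L')
    (h : V ≃ₗ[ℚ] V) (hL' : Set.MapsTo h.symm L' L') (hh : ∀ u ∈ L', h u - u ∈ K) :
    h '' L = L := by
  refine h.image_eq_self_of_mapsTo (fun x hx => ?_) (fun x hx => ?_)
  · rw [← sub_add_cancel (h x) x]
    exact L.add_mem (hKL (hh x (hLL' hx))) hx
  · have := hh _ (hL' (hLL' hx))
    rw [h.apply_symm_apply] at this
    rw [← sub_add_cancel (h.symm x) x, ← neg_sub]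
    exact L.add_mem (L.neg_mem (hKL this)) hx

theorem sub_mem_of_forall_sub_mem_smul {F : Type*} [FunLike F V V] [LinearMapClass F ℚ V V]
    {L L' : Submodule ℤ V} {c d : ℚ} (hd : d ≠ 0) (hc : ∀ z ∈ L', c • z ∈ L) (h : F)
    (hh : ∀ u ∈ L', h u - u ∈ ((c * d) • L' : Submodule ℤ V)) {x : V} (hx : d • x ∈ L') :
    h x - x ∈ L := by
  obtain ⟨z, hz, hzx⟩ := (mem_smul_pointwise_iff_exists _ _ _).1 (hh _ hx)
  suffices h x - x = c • z from this ▸ hc z hz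
  refine smul_right_injective V hd ?_
  simp only
  rw [smul_sub, ← map_smul, ← hzx, mul_smul, smul_comm]

end Lattice

theorem stmt_4_general {V : Type*} [AddCommGroup V] [Module ℚ V] [FiniteDimensional ℚ V]
    (B : V →ₗ[ℚ] V →ₗ[ℚ] ℚ)
    (hnd : ∀ x : V, (∀ y : V, B x y = 0) → x = 0)
    (L L' : Submodule ℤ V)
    (hfg : L'.FG)
    (hfull : Submodule.span ℚ (L : Set V) = ⊤)
    (hLL' : L ≤ L')
    (M : ℕ) (hM : 0 < M)
    (hML : ∀ x ∈ L', (M : ℚ) • x ∈ L) :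
    -- (1) the stabiliser of `I = L/M·L'` in `O(L')` is contained in `O(L)`
    ((∀ g : V ≃ₗ[ℚ] V, (∀ x y : V, B (g x) (g y) = B x y) →
        ⇑g '' (L' : Set V) = (L' : Set V) →
        (∀ x ∈ L, ∃ y ∈ L, ∃ z ∈ L', g x - y = (M : ℚ) • z) →
        (∀ x ∈ L, ∃ y ∈ L, ∃ z ∈ L', g.symm x - y = (M : ℚ) • z) →
        ⇑g '' (L : Set V) = (L : Set V)) ∧
    -- (2) `Õ(L) ∩ O(L')` has finite index in `O(L')`
    (∃ T : Finset (V ≃ₗ[ℚ] V),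
      ∀ g : V ≃ₗ[ℚ] V, (∀ x y : V, B (g x) (g y) = B x y) →
        ⇑g '' (L' : Set V) = (L' : Set V) →
        ∃ t ∈ T,
          (∀ x y : V, B ((g.trans t.symm) x) ((g.trans t.symm) y) = B x y) ∧
          ⇑(g.trans t.symm) '' (L' : Set V) = (L' : Set V) ∧
          ⇑(g.trans t.symm) '' (L : Set V) = (L : Set V) ∧
          (∀ x : V, (∀ y ∈ L, IsIntQ (B x y)) → (g.trans t.symm) x - x ∈ L))) := by
  refine ⟨fun g _ _ hgL hgL' => g.image_eq_self_of_mapsTo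
    (mapsTo_of_forall_exists_sub_eq_smul hML hgL) (mapsTo_of_forall_exists_sub_eq_smul hML hgL'),
    ?_⟩
  obtain ⟨D, hD, hDL⟩ := exists_natCast_smul_mem_of_mem_dualSubmodule hnd hfull
  let K : Submodule ℤ V := ((M * D : ℕ) : ℚ) • L'
  have : Finite (L'.map K.mkQ) := finite_map_mkQ_natCast_smul hfg (Nat.mul_pos hM hD).ne'
  obtain ⟨T, hT⟩ := exists_finset_forall_sub_mem (K := K) hfg
    {g | (∀ x y, B (g x) (g y) = B x y) ∧ ⇑g '' (L' : Set V) = L'}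
    (fun g hg => g.mapsTo_of_image_eq_self hg.2)
  refine ⟨T, fun g hgB hgL' => ?_⟩
  obtain ⟨t, htT, ⟨htB, htL'⟩, hgt⟩ := hT g ⟨hgB, hgL'⟩
  have hcong : ∀ u ∈ L', g.trans t.symm u - u ∈ ((M : ℚ) * D) • L' := by
    simpa only [K, Nat.cast_mul] using trans_symm_sub_mem
      (mapsTo_smul_of_mapsTo t.symm (t.mapsTo_symm_of_image_eq_self htL') _) hgt
  have hKL : ((M : ℚ) * D) • L' ≤ L := fun z hz => by
    obtain ⟨y, hy, rfl⟩ := (mem_smul_pointwise_iff_exists _ _ _).1 hz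
    rw [mul_smul]
    exact hML _ (natCast_smul_mem L' D hy)
  have hhL' := LinearEquiv.image_trans_symm_eq_self hgL' htL'
  refine ⟨t, htT, LinearEquiv.isometry_trans_symm B hgB htB, hhL',
    image_eq_self_of_forall_sub_mem hKL hLL' _ (LinearEquiv.mapsTo_symm_of_image_eq_self _ hhL')
      hcong,
    fun x hx => sub_mem_of_forall_sub_mem_smul (Nat.cast_ne_zero.2 hD.ne') hML _ hcong
      (hLL' (hDL x fun y hy => isIntQ_iff_mem_one.1 (hx y hy)))⟩

/-- for a finite-index inclusion of lattices `L ⊆ L'` with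
`M·L' ⊆ L ⊆ L'` (`M` the exponent of `L'/L`):
(1) any isometry of `L'` stabilising the subgroup `I = L/M·L'` of `Q = L'/M·L'`
preserves `L`, so lies in `O(L)`;
(2) consequently the subgroup `Õ(L) ∩ O(L')` has finite index in `O(L')`
(expressed by a finite set of coset representatives; the stable group `Õ(L)` is the
kernel of `O(L) → O(D(L))`, expressed concretely via `g x - x ∈ L` for `x ∈ L^∨`). -/
theorem stmt_4 {V : Type*} [AddCommGroup V] [Module ℚ V] [FiniteDimensional ℚ V]
    (B : V →ₗ[ℚ] V →ₗ[ℚ] ℚ)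
    (hsymm : ∀ x y : V, B x y = B y x)
    (hnd : ∀ x : V, (∀ y : V, B x y = 0) → x = 0)
    (L L' : Submodule ℤ V)
    (hfg : L'.FG)
    (hfull : Submodule.span ℚ (L : Set V) = ⊤)
    (hint : ∀ x ∈ L', ∀ y ∈ L', IsIntQ (B x y))
    (heven : ∀ x ∈ L', ∃ k : ℤ, B x x = 2 * (k : ℚ))
    (hLL' : L ≤ L')
    (M : ℕ) (hM : 0 < M)
    (hML : ∀ x ∈ L', (M : ℚ) • x ∈ L) :
    -- (1) the stabiliser of `I = L/M·L'` in `O(L')` is contained in `O(L)`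
    ((∀ g : V ≃ₗ[ℚ] V, (∀ x y : V, B (g x) (g y) = B x y) →
        ⇑g '' (L' : Set V) = (L' : Set V) →
        (∀ x ∈ L, ∃ y ∈ L, ∃ z ∈ L', g x - y = (M : ℚ) • z) →
        (∀ x ∈ L, ∃ y ∈ L, ∃ z ∈ L', g.symm x - y = (M : ℚ) • z) →
        ⇑g '' (L : Set V) = (L : Set V)) ∧
    -- (2) `Õ(L) ∩ O(L')` has finite index in `O(L')`
    (∃ T : Finset (V ≃ₗ[ℚ] V),
      ∀ g : V ≃ₗ[ℚ] V, (∀ x y : V, B (g x) (g y) = B x y) →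
        ⇑g '' (L' : Set V) = (L' : Set V) →
        ∃ t ∈ T,
          (∀ x y : V, B ((g.trans t.symm) x) ((g.trans t.symm) y) = B x y) ∧
          ⇑(g.trans t.symm) '' (L' : Set V) = (L' : Set V) ∧
          ⇑(g.trans t.symm) '' (L : Set V) = (L : Set V) ∧
          (∀ x : V, (∀ y ∈ L, IsIntQ (B x y)) → (g.trans t.symm) x - x ∈ L))) :=
  stmt_4_general B hnd L L' hfg hfull hLL' M hM hML
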